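/- arXiv:2506.10632 — 3 statements merged into one kernel-verified Lean document; each statement's English description precedes it below -/
import Mathlib

section
/- Let φ : ℝⁿ → ℝ be twice continuously differentiable. If for all t, t' in a convex open set S the Bregman divergence of φ₁ equals that of φ₂, i.e., φ₁(t) - φ₁(t') - ⟨∇φ₁(t'), t - t'⟩ = φ₂(t) - φ₂(t') - ⟨∇φ₂(t'), t - t'⟩, then φ₁ - φ₂ is affine on S: there exist c ∈ ℝⁿ and b ∈ ℝ with φ₁(t) = φ₂(t) + ⟨c, t⟩ + b for all t ∈ S. -/
open scoped RealInnerProductSpace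

theorem eq_add_inner_add_of_bregman_eq {E : Type*} [NormedAddCommGroup E] [InnerProductSpace ℝ E]
    {φ₁ φ₂ : E → ℝ} {g₁ g₂ t₀ t : E}
    (h : φ₁ t - φ₁ t₀ - ⟪g₁, t - t₀⟫ = φ₂ t - φ₂ t₀ - ⟪g₂, t - t₀⟫) :
    φ₁ t = φ₂ t + ⟪g₁ - g₂, t⟫ + (φ₁ t₀ - φ₂ t₀ - ⟪g₁ - g₂, t₀⟫) := by
  simp only [inner_sub_left, inner_sub_right] at h ⊢
  linarith

theorem bregman_eq_imp_affine_diff_general {n : ℕ} (S : Set (EuclideanSpace ℝ (Fin n)))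
    (hSne : S.Nonempty)
    (φ₁ φ₂ : EuclideanSpace ℝ (Fin n) → ℝ)
    (g₁ g₂ : EuclideanSpace ℝ (Fin n) → EuclideanSpace ℝ (Fin n))
    (hbreg : ∀ t ∈ S, ∀ t' ∈ S,
      φ₁ t - φ₁ t' - ⟪g₁ t', t - t'⟫ = φ₂ t - φ₂ t' - ⟪g₂ t', t - t'⟫) :
    ∃ (c : EuclideanSpace ℝ (Fin n)) (b : ℝ), ∀ t ∈ S, φ₁ t = φ₂ t + ⟪c, t⟫ + b := by
  obtain ⟨t₀, ht₀⟩ := hSne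
  exact ⟨_, _, fun t ht => eq_add_inner_add_of_bregman_eq (hbreg t ht t₀ ht₀)⟩

/-- If two differentiable functions on a nonempty convex open set `S` have equal Bregman
divergences for all pairs of points in `S`, then they differ by an affine function on `S`. -/
theorem bregman_eq_imp_affine_diff {n : ℕ} (S : Set (EuclideanSpace ℝ (Fin n)))
    (hSne : S.Nonempty) (hSconv : Convex ℝ S) (hSopen : IsOpen S)
    (φ₁ φ₂ : EuclideanSpace ℝ (Fin n) → ℝ)
    (g₁ g₂ : EuclideanSpace ℝ (Fin n) → EuclideanSpace ℝ (Fin n))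
    (hg₁ : ∀ t ∈ S, HasGradientAt φ₁ (g₁ t) t)
    (hg₂ : ∀ t ∈ S, HasGradientAt φ₂ (g₂ t) t)
    (hbreg : ∀ t ∈ S, ∀ t' ∈ S,
      φ₁ t - φ₁ t' - ⟪g₁ t', t - t'⟫ = φ₂ t - φ₂ t' - ⟪g₂ t', t - t'⟫) :
    ∃ (c : EuclideanSpace ℝ (Fin n)) (b : ℝ), ∀ t ∈ S, φ₁ t = φ₂ t + ⟪c, t⟫ + b :=
  bregman_eq_imp_affine_diff_general S hSne φ₁ φ₂ g₁ g₂ hbreg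
end

section
/- Laplace principle with almost-sure varying exponents: let S ⊂ ℝⁿ be compact with positive volume, ψ(s, x) continuous in both variables and uniformly continuous in x uniformly over s ∈ S, and let X̄_N be random vectors converging almost surely to μ. Then (1/N) log ∫_S exp(N ψ(s, X̄_N)) ds converges almost surely to max_{s∈S} ψ(s, μ). -/
/-!
For continuous `g`, the quantity `(1/t) log ∫_S exp (t g)` lies below `max_S g + (1/t) log vol S`
and above `max_S g - ε + (1/t) log vol V`, where `V` is a nonempty open subset of `S` on which
`g > max_S g - ε`; such a `V` exists because `S` is the closure of its interior. Both bounds tend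
to the maximum up to `ε`. The map `g ↦ (1/t) log ∫_S exp (t g)` is 1-Lipschitz for the sup norm,
and by compactness of `S` and joint continuity of `ψ`, `ψ(·, x) → ψ(·, μ)` uniformly on `S` as
`x → μ`; so the convergence transfers along every path with `X̄_N(ω) → μ`.
-/

open MeasureTheory Real Filter Set Topology

noncomputable def scaledLogIntegralExp {X : Type*} [MeasurableSpace X] (ν : Measure X) (t : ℝ)
    (g : X → ℝ) : ℝ :=
  1 / t * log (∫ x, exp (t * g x) ∂ν)

section Comparison

variable {X : Type*} [MeasurableSpace X] {ν μ : Measure X} {t δ c : ℝ} {g h : X → ℝ}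

theorem scaledLogIntegralExp_le_add [NeZero ν] (ht : 0 < t)
    (hg : Integrable (fun x => exp (t * g x)) ν) (hh : Integrable (fun x => exp (t * h x)) ν)
    (hgh : ∀ᵐ x ∂ν, g x ≤ h x + δ) :
    scaledLogIntegralExp ν t g ≤ scaledLogIntegralExp ν t h + δ := by
  have hint : ∫ x, exp (t * g x) ∂ν ≤ exp (t * δ) * ∫ x, exp (t * h x) ∂ν := by
    rw [← integral_const_mul]
    refine integral_mono_ae hg (hh.const_mul _) ?_
    filter_upwards [hgh] with x hx
    rw [← exp_add]
    exact exp_le_exp.2 (by nlinarith)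
  have hlog := log_le_log (integral_exp_pos hg) hint
  rw [log_mul (exp_ne_zero _) (integral_exp_pos hh).ne', log_exp] at hlog
  unfold scaledLogIntegralExp
  calc 1 / t * log (∫ x, exp (t * g x) ∂ν)
      ≤ 1 / t * (t * δ + log (∫ x, exp (t * h x) ∂ν)) := by gcongr
    _ = 1 / t * log (∫ x, exp (t * h x) ∂ν) + δ := by field_simp; ring

theorem abs_scaledLogIntegralExp_sub_le [NeZero ν] (ht : 0 < t)
    (hg : Integrable (fun x => exp (t * g x)) ν) (hh : Integrable (fun x => exp (t * h x)) ν)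
    (hgh : ∀ᵐ x ∂ν, |g x - h x| ≤ δ) :
    |scaledLogIntegralExp ν t g - scaledLogIntegralExp ν t h| ≤ δ := by
  have hle := scaledLogIntegralExp_le_add (δ := δ) ht hg hh
    (hgh.mono fun x hx => by linarith [(abs_le.1 hx).2])
  have hge := scaledLogIntegralExp_le_add (δ := δ) ht hh hg
    (hgh.mono fun x hx => by linarith [(abs_le.1 hx).1])
  exact abs_sub_le_iff.2 ⟨by linarith, by linarith⟩

theorem scaledLogIntegralExp_const [IsFiniteMeasure ν] [NeZero ν] (ht : t ≠ 0) :
    scaledLogIntegralExp ν t (fun _ => c) = 1 / t * log (ν.real univ) + c := by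
  unfold scaledLogIntegralExp
  rw [integral_const, smul_eq_mul, log_mul measureReal_univ_ne_zero (exp_ne_zero _), log_exp]
  field_simp

theorem tendsto_scaledLogIntegralExp_const [IsFiniteMeasure ν] [NeZero ν] :
    Tendsto (fun t => scaledLogIntegralExp ν t (fun _ => c)) atTop (𝓝 c) := by
  have hlim : Tendsto (fun t : ℝ => 1 / t * log (ν.real univ) + c) atTop
      (𝓝 (0 * log (ν.real univ) + c)) :=
    ((tendsto_inv_atTop_zero.congr fun t => (one_div t).symm).mul_const _).add_const _
  rw [zero_mul, zero_add] at hlim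
  refine hlim.congr' ?_
  filter_upwards [eventually_ne_atTop 0] with t ht
  exact (scaledLogIntegralExp_const ht).symm

theorem scaledLogIntegralExp_mono_measure [NeZero ν] (ht : 0 < t) (hνμ : ν ≤ μ)
    (hg : Integrable (fun x => exp (t * g x)) μ) :
    scaledLogIntegralExp ν t g ≤ scaledLogIntegralExp μ t g := by
  have hgν : Integrable (fun x => exp (t * g x)) ν := hg.mono_measure hνμ
  unfold scaledLogIntegralExp
  exact mul_le_mul_of_nonneg_left (log_le_log (integral_exp_pos hgν)
    (integral_mono_measure hνμ (Eventually.of_forall fun x => (exp_pos _).le) hg)) (by positivity)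

end Comparison

theorem Continuous.tendstoUniformlyOn_of_isCompact {α β γ : Type*} [UniformSpace α]
    [WeaklyLocallyCompactSpace α] [UniformSpace β] [UniformSpace γ] {f : α → β → γ}
    (hf : Continuous ↿f) {K : Set β} (hK : IsCompact K) (x : α) :
    TendstoUniformlyOn f (f x) (𝓝 x) K := by
  have : CompactSpace K := isCompact_iff_compactSpace.1 hK
  rw [tendstoUniformlyOn_iff_tendstoUniformly_comp_coe]
  exact Continuous.tendstoUniformly (fun a (k : K) => f a k)
    (hf.comp (continuous_fst.prodMk (continuous_subtype_val.comp continuous_snd))) x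

theorem exists_isOpen_subset_of_lt {X : Type*} [TopologicalSpace X] {S : Set X} {g : X → ℝ}
    (hScl : S ⊆ closure (interior S)) (hg : ContinuousOn g S)
    {s₀ : X} (hs₀ : s₀ ∈ S) {c : ℝ} (hc : c < g s₀) :
    ∃ V, IsOpen V ∧ V.Nonempty ∧ V ⊆ S ∧ ∀ x ∈ V, c < g x := by
  obtain ⟨W, hWo, hs₀W, hWS⟩ := mem_nhdsWithin.1 (hg s₀ hs₀ (Ioi_mem_nhds hc))
  obtain ⟨x, hxW, hxS⟩ := mem_closure_iff.1 (hScl hs₀) W hWo hs₀W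
  exact ⟨W ∩ interior S, hWo.inter isOpen_interior, ⟨x, hxW, hxS⟩,
    fun y hy => interior_subset hy.2, fun y hy => hWS ⟨hy.1, interior_subset hy.2⟩⟩

theorem ContinuousOn.integrable_exp_mul_restrict {X : Type*} [TopologicalSpace X]
    [MeasurableSpace X] [OpensMeasurableSpace X] [T2Space X] {μ : Measure X}
    [IsFiniteMeasureOnCompacts μ] {S : Set X} {g : X → ℝ} (hS : IsCompact S)
    (hg : ContinuousOn g S) (t : ℝ) : Integrable (fun x => exp (t * g x)) (μ.restrict S) :=
  (continuous_exp.comp_continuousOn (continuousOn_const.mul hg)).integrableOn_compact hS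

section Laplace

variable {X : Type*} [TopologicalSpace X] [MeasurableSpace X] [OpensMeasurableSpace X]
  [T2Space X] {μ : Measure X} [IsFiniteMeasureOnCompacts μ] [μ.IsOpenPosMeasure]
  {S : Set X} {g : X → ℝ}

theorem tendsto_scaledLogIntegralExp_restrict (hS : IsCompact S) (hSne : S.Nonempty)
    (hScl : S ⊆ closure (interior S)) (hg : ContinuousOn g S) :
    Tendsto (fun t => scaledLogIntegralExp (μ.restrict S) t g) atTop (𝓝 (sSup (g '' S))) := by
  have : NeZero (μ S) :=
    ⟨(μ.measure_pos_of_nonempty_interior (closure_nonempty_iff.1 (hSne.mono hScl))).ne'⟩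
  have : IsFiniteMeasure (μ.restrict S) := isFiniteMeasure_restrict.2 hS.measure_ne_top
  obtain ⟨s₀, hs₀, hmax⟩ := hS.exists_isMaxOn hSne hg
  rw [IsGreatest.csSup_eq ⟨mem_image_of_mem g hs₀, forall_mem_image.2 hmax⟩]
  refine tendsto_order.2 ⟨fun a ha => ?_, fun a ha => ?_⟩
  · obtain ⟨V, hVo, hVne, hVS, hgV⟩ :=
      exists_isOpen_subset_of_lt hScl hg hs₀ (c := (a + g s₀) / 2) (by linarith)
    have : NeZero (μ V) := ⟨(hVo.measure_pos μ hVne).ne'⟩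
    have : IsFiniteMeasure (μ.restrict V) :=
      isFiniteMeasure_restrict.2 (measure_ne_top_of_subset hVS hS.measure_ne_top)
    have hVS' : μ.restrict V ≤ μ.restrict S := Measure.restrict_mono hVS le_rfl
    filter_upwards [(tendsto_scaledLogIntegralExp_const (ν := μ.restrict V)).eventually_const_lt
      (by linarith : a < (a + g s₀) / 2), eventually_gt_atTop 0] with t hta ht
    calc a < scaledLogIntegralExp (μ.restrict V) t (fun _ => (a + g s₀) / 2) := hta
      _ ≤ scaledLogIntegralExp (μ.restrict V) t g + 0 :=
        scaledLogIntegralExp_le_add ht (integrable_const _)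
          ((hg.integrable_exp_mul_restrict hS t).mono_measure hVS')
          (ae_restrict_of_forall_mem hVo.measurableSet fun x hx => by linarith [hgV x hx])
      _ ≤ scaledLogIntegralExp (μ.restrict S) t g := by
        rw [add_zero]
        exact scaledLogIntegralExp_mono_measure ht hVS' (hg.integrable_exp_mul_restrict hS t)
  · filter_upwards [(tendsto_scaledLogIntegralExp_const (ν := μ.restrict S)).eventually_lt_const
      ha, eventually_gt_atTop 0] with t hta ht
    calc scaledLogIntegralExp (μ.restrict S) t g
        ≤ scaledLogIntegralExp (μ.restrict S) t (fun _ => g s₀) + 0 :=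
          scaledLogIntegralExp_le_add ht (hg.integrable_exp_mul_restrict hS t)
            (integrable_const _)
            (ae_restrict_of_forall_mem hS.measurableSet fun x hx => by simpa using hmax hx)
      _ < a := by rwa [add_zero]

theorem tendsto_scaledLogIntegralExp_of_tendstoUniformlyOn {ι : Type*} {l : Filter ι}
    {τ : ι → ℝ} (hτ : Tendsto τ l atTop) {F : ι → X → ℝ} (hFg : TendstoUniformlyOn F g l S)
    (hF : ∀ i, ContinuousOn (F i) S) (hS : IsCompact S) (hSne : S.Nonempty)
    (hScl : S ⊆ closure (interior S)) (hg : ContinuousOn g S) :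
    Tendsto (fun i => scaledLogIntegralExp (μ.restrict S) (τ i) (F i)) l
      (𝓝 (sSup (g '' S))) := by
  have : NeZero (μ S) :=
    ⟨(μ.measure_pos_of_nonempty_interior (closure_nonempty_iff.1 (hSne.mono hScl))).ne'⟩
  have hdiff : Tendsto (fun i => scaledLogIntegralExp (μ.restrict S) (τ i) (F i) -
      scaledLogIntegralExp (μ.restrict S) (τ i) g) l (𝓝 0) := by
    refine Metric.tendsto_nhds.2 fun ε hε => ?_
    filter_upwards [Metric.tendstoUniformlyOn_iff.1 hFg (ε / 2) (half_pos hε),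
      hτ.eventually_gt_atTop 0] with i hi hτi
    rw [Real.dist_0_eq_abs]
    refine (abs_scaledLogIntegralExp_sub_le hτi ((hF i).integrable_exp_mul_restrict hS _)
      (hg.integrable_exp_mul_restrict hS _)
      (ae_restrict_of_forall_mem hS.measurableSet fun x hx => ?_)).trans_lt (half_lt_self hε)
    rw [← Real.dist_eq, dist_comm]
    exact (hi x hx).le
  simpa using
    hdiff.add ((tendsto_scaledLogIntegralExp_restrict (μ := μ) hS hSne hScl hg).comp hτ)

end Laplace

theorem laplace_principle_as_general {n m : ℕ} {Ω : Type*} [MeasurableSpace Ω]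
    (P : Measure Ω)
    (S : Set (EuclideanSpace ℝ (Fin n)))
    (hS : IsCompact S) (hSne : S.Nonempty)
    (hScl : S = closure (interior S))
    (ψ : EuclideanSpace ℝ (Fin n) → EuclideanSpace ℝ (Fin m) → ℝ)
    (hψ : Continuous (fun p : EuclideanSpace ℝ (Fin n) × EuclideanSpace ℝ (Fin m) =>
      ψ p.1 p.2))
    (Xbar : ℕ → Ω → EuclideanSpace ℝ (Fin m)) (μ₀ : EuclideanSpace ℝ (Fin m))
    (hconv : ∀ᵐ ω ∂P, Tendsto (fun N => Xbar N ω) atTop (nhds μ₀)) :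
    ∀ᵐ ω ∂P,
      Tendsto (fun N : ℕ =>
          (1 / (N : ℝ)) * Real.log (∫ s in S, Real.exp ((N : ℝ) * ψ s (Xbar N ω))))
        atTop (nhds (sSup ((fun s => ψ s μ₀) '' S))) := by
  have hunif : TendstoUniformlyOn (fun x s => ψ s x) (fun s => ψ s μ₀) (𝓝 μ₀) S :=
    (hψ.comp continuous_swap).tendstoUniformlyOn_of_isCompact hS μ₀
  have hcont : ∀ x, Continuous fun s => ψ s x := fun x =>
    hψ.comp (continuous_id.prodMk continuous_const)
  filter_upwards [hconv] with ω hω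
  have hpath : TendstoUniformlyOn (fun N s => ψ s (Xbar N ω)) (fun s => ψ s μ₀) atTop S :=
    fun u hu => hω.eventually (hunif u hu)
  exact tendsto_scaledLogIntegralExp_of_tendstoUniformlyOn (μ := volume)
    tendsto_natCast_atTop_atTop hpath (fun N => (hcont _).continuousOn) hS hSne hScl.subset
    (hcont μ₀).continuousOn

/-- Laplace principle with almost-surely varying exponents: if `X̄_N → μ₀` almost surely and
`ψ` is continuous, Lipschitz in its second argument uniformly over `s ∈ S`, then
`(1/N) log ∫_S exp (N ψ(s, X̄_N)) ds → max_{s ∈ S} ψ(s, μ₀)` almost surely. -/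
theorem laplace_principle_as {n m : ℕ} {Ω : Type*} [MeasurableSpace Ω]
    (P : Measure Ω) [IsProbabilityMeasure P]
    (S : Set (EuclideanSpace ℝ (Fin n)))
    (hS : IsCompact S) (hSne : S.Nonempty)
    (hScl : S = closure (interior S)) (hvol : 0 < volume S)
    (ψ : EuclideanSpace ℝ (Fin n) → EuclideanSpace ℝ (Fin m) → ℝ)
    (hψ : Continuous (fun p : EuclideanSpace ℝ (Fin n) × EuclideanSpace ℝ (Fin m) =>
      ψ p.1 p.2))
    (M : ℝ)
    (hLip : ∀ s ∈ S, ∀ x₁ x₂ : EuclideanSpace ℝ (Fin m),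
      |ψ s x₁ - ψ s x₂| ≤ M * ‖x₁ - x₂‖)
    (Xbar : ℕ → Ω → EuclideanSpace ℝ (Fin m)) (μ₀ : EuclideanSpace ℝ (Fin m))
    (hconv : ∀ᵐ ω ∂P, Tendsto (fun N => Xbar N ω) atTop (nhds μ₀)) :
    ∀ᵐ ω ∂P,
      Tendsto (fun N : ℕ =>
          (1 / (N : ℝ)) * Real.log (∫ s in S, Real.exp ((N : ℝ) * ψ s (Xbar N ω))))
        atTop (nhds (sSup ((fun s => ψ s μ₀) '' S))) :=
  laplace_principle_as_general P S hS hSne hScl ψ hψ Xbar μ₀ hconv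
end

section
/- Posterior concentration for exponential families (pointwise form): let the likelihood be p(x|t) = exp(⟨t, f(x)⟩ - log Z(t)) on a compact parameter set S ⊂ ℝⁿ with uniform prior, and suppose x₁,...,x_N are i.i.d. samples from p(·|t'). If the empirical mean (1/N)∑f(x_i) converges almost surely to ∇log Z(t'), then for every t ∈ S, the N-th root of the posterior density p(t|x₁,...,x_N)^{1/N} converges almost surely to exp(-D_{log Z}(t, t')), where D_{log Z}(t, t') = log Z(t) - log Z(t') - ⟨∇log Z(t'), t - t'⟩. -/
/-!
Write `m_N` for the empirical mean of `f` and `ψ_N s = ⟪s, m_N⟫ - log Z s`. The posterior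
density is `exp (N ψ_N t) / ∫_S exp (N ψ_N)`, so its `N`-th root is
`exp (ψ_N t - N⁻¹ log ∫_S exp (N ψ_N))`. As `m_N → ∇ log Z (t')`, `ψ_N` converges uniformly on
the bounded set `S` to `ψ s = ⟪s, ∇ log Z (t')⟫ - log Z s`, which by convexity of `log Z` is
maximal on `S` at the interior point `t'`. The Laplace principle gives
`N⁻¹ log ∫_S exp (N ψ_N) → ψ t'`, and `ψ t' - ψ t` is the Bregman divergence `D_{log Z}(t, t')`.
-/

open MeasureTheory Real Filter Topology
open scoped RealInnerProductSpace

section Convexity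

variable {E : Type*} [NormedAddCommGroup E] {S : Set E} {f : E → ℝ} {x y : E}

theorem ConvexOn.apply_sub_le_of_hasFDerivAt [NormedSpace ℝ E] {f' : E →L[ℝ] ℝ}
    (hf : ConvexOn ℝ S f) (hx : x ∈ S) (hy : y ∈ S) (hf' : HasFDerivAt f f' x) :
    f' (y - x) ≤ f y - f x := by
  have hline : ConvexOn ℝ (AffineMap.lineMap (k := ℝ) x y ⁻¹' S)
      (f ∘ AffineMap.lineMap (k := ℝ) x y) :=
    hf.comp_affineMap _
  have hderiv : HasDerivAt (f ∘ AffineMap.lineMap (k := ℝ) x y) (f' (y - x)) 0 := by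
    refine HasFDerivAt.comp_hasDerivAt (0 : ℝ) ?_ AffineMap.hasDerivAt_lineMap
    simpa using hf'
  simpa [slope_def_field] using
    hline.le_slope_of_hasDerivAt (by simpa) (by simpa) zero_lt_one hderiv

theorem ConvexOn.isMaxOn_inner_sub_of_hasGradientAt [InnerProductSpace ℝ E] [CompleteSpace E]
    {g : E} (hf : ConvexOn ℝ S f) (hx : x ∈ S) (hg : HasGradientAt f g x) :
    IsMaxOn (fun s => ⟪s, g⟫ - f s) S x := by
  intro s hs
  have := hf.apply_sub_le_of_hasFDerivAt hx hs (hasGradientAt_iff_hasFDerivAt.1 hg)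
  rw [InnerProductSpace.toDual_apply_apply, inner_sub_right, real_inner_comm s,
    real_inner_comm x] at this
  change ⟪s, g⟫ - f s ≤ ⟪x, g⟫ - f x
  linarith

end Convexity

theorem Bornology.IsBounded.tendstoUniformlyOn_inner_sub {E ι : Type*} [NormedAddCommGroup E]
    [InnerProductSpace ℝ E] {S : Set E} (hS : Bornology.IsBounded S) {l : Filter ι}
    {m : ι → E} {g : E} (hm : Tendsto m l (𝓝 g)) (u : E → ℝ) :
    TendstoUniformlyOn (fun i s => ⟪s, m i⟫ - u s) (fun s => ⟪s, g⟫ - u s) l S := by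
  obtain ⟨R, hR, hSR⟩ := hS.exists_pos_norm_le
  refine Metric.tendstoUniformlyOn_iff.2 fun ε hε => ?_
  filter_upwards [(tendsto_iff_norm_sub_tendsto_zero.1 hm).eventually
    (gt_mem_nhds (div_pos hε hR))] with i hi s hs
  calc dist (⟪s, g⟫ - u s) (⟪s, m i⟫ - u s) = |⟪s, m i - g⟫| := by
        rw [dist_sub_right, Real.dist_eq, abs_sub_comm, inner_sub_right]
    _ ≤ ‖s‖ * ‖m i - g‖ := abs_real_inner_le_norm _ _
    _ ≤ R * ‖m i - g‖ := by gcongr; exact hSR s hs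
    _ < ε := by rwa [lt_div_iff₀' hR] at hi

lemma inv_mul_log_mul_exp_mul {r c : ℝ} (hr : r ≠ 0) (hc : 0 < c) (a : ℝ) :
    r⁻¹ * log (c * exp (r * a)) = r⁻¹ * log c + a := by
  rw [log_mul hc.ne' (exp_pos _).ne', log_exp]
  field_simp

lemma rpow_inv_exp_mul_div {r J : ℝ} (hr : r ≠ 0) (hJ : 0 < J) (a : ℝ) :
    (exp (r * a) / J) ^ r⁻¹ = exp (a - r⁻¹ * log J) := by
  rw [div_rpow (exp_pos _).le hJ.le, ← exp_mul, rpow_def_of_pos hJ, ← exp_sub]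
  field_simp

lemma eventually_lt_of_le_inv_mul_add {L : ℕ → ℝ} {C a b : ℝ} (hab : a < b)
    (hL : ∀ᶠ N : ℕ in atTop, L N ≤ (N : ℝ)⁻¹ * C + a) : ∀ᶠ N in atTop, L N < b := by
  have : Tendsto (fun N : ℕ => (N : ℝ)⁻¹ * C + a) atTop (𝓝 a) := by
    simpa using (tendsto_inv_atTop_nhds_zero_nat.mul_const C).add_const a
  filter_upwards [hL, this.eventually (gt_mem_nhds hab)] with N h₁ h₂ using h₁.trans_lt h₂

lemma eventually_gt_of_inv_mul_add_le {L : ℕ → ℝ} {C a b : ℝ} (hba : b < a)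
    (hL : ∀ᶠ N : ℕ in atTop, (N : ℝ)⁻¹ * C + a ≤ L N) : ∀ᶠ N in atTop, b < L N := by
  have : Tendsto (fun N : ℕ => (N : ℝ)⁻¹ * C + a) atTop (𝓝 a) := by
    simpa using (tendsto_inv_atTop_nhds_zero_nat.mul_const C).add_const a
  filter_upwards [hL, this.eventually (lt_mem_nhds hba)] with N h₁ h₂ using h₂.trans_le h₁

section SetIntegralExp

variable {α : Type*} [MeasurableSpace α] {μ : Measure α} {S : Set α} {u : α → ℝ} {r c : ℝ}

lemma setIntegral_exp_pos (hμS : μ S ≠ 0) (hint : IntegrableOn (fun s => exp (u s)) S μ) :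
    0 < ∫ s in S, exp (u s) ∂μ :=
  have : NeZero (μ.restrict S) := ⟨Measure.restrict_eq_zero.not.2 hμS⟩
  integral_exp_pos hint

lemma setIntegral_exp_mul_le (hr : 0 ≤ r) (hS : MeasurableSet S) (hμS : μ S ≠ ⊤)
    (hint : IntegrableOn (fun s => exp (r * u s)) S μ) (hle : ∀ s ∈ S, u s ≤ c) :
    ∫ s in S, exp (r * u s) ∂μ ≤ μ.real S * exp (r * c) := by
  calc ∫ s in S, exp (r * u s) ∂μ ≤ ∫ _ in S, exp (r * c) ∂μ :=
        setIntegral_mono_on hint (integrableOn_const hμS) hS fun s hs => by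
          gcongr; exact hle s hs
    _ = μ.real S * exp (r * c) := by rw [setIntegral_const, smul_eq_mul]

lemma mul_exp_mul_le_setIntegral {U : Set α} (hr : 0 ≤ r) (hU : MeasurableSet U) (hUS : U ⊆ S)
    (hμU : μ U ≠ ⊤) (hint : IntegrableOn (fun s => exp (r * u s)) S μ)
    (hle : ∀ s ∈ U, c ≤ u s) :
    μ.real U * exp (r * c) ≤ ∫ s in S, exp (r * u s) ∂μ := by
  calc μ.real U * exp (r * c) = ∫ _ in U, exp (r * c) ∂μ := by
        rw [setIntegral_const, smul_eq_mul]
    _ ≤ ∫ s in U, exp (r * u s) ∂μ :=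
        setIntegral_mono_on (integrableOn_const hμU) (hint.mono_set hUS) hU fun s hs => by
          gcongr; exact hle s hs
    _ ≤ ∫ s in S, exp (r * u s) ∂μ :=
        setIntegral_mono_set hint (.of_forall fun _ => (exp_pos _).le) hUS.eventuallyLE

end SetIntegralExp

section Laplace

variable {α : Type*} [MeasurableSpace α] {μ : Measure α} {S : Set α} {h : ℕ → α → ℝ}
  {φ : α → ℝ}

lemma eventually_inv_mul_log_setIntegral_exp_mul_lt {M b : ℝ} (hS : MeasurableSet S)
    (hμS : μ S ≠ ⊤) (hμS₀ : 0 < μ S) (hmax : ∀ s ∈ S, φ s ≤ M)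
    (hh : TendstoUniformlyOn h φ atTop S)
    (hint : ∀ N : ℕ, IntegrableOn (fun s => exp (N * h N s)) S μ) (hb : M < b) :
    ∀ᶠ N : ℕ in atTop, (N : ℝ)⁻¹ * log (∫ s in S, exp (N * h N s) ∂μ) < b := by
  obtain ⟨ε, hε, hεb⟩ : ∃ ε > 0, M + ε < b := ⟨(b - M) / 2, by linarith, by linarith⟩
  refine eventually_lt_of_le_inv_mul_add (C := log (μ.real S)) hεb ?_
  filter_upwards [Metric.tendstoUniformlyOn_iff.1 hh ε hε, eventually_ne_atTop 0]
    with N hN hN₀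
  have hr : (0 : ℝ) < N := by positivity
  rw [← inv_mul_log_mul_exp_mul (c := μ.real S) hr.ne' (ENNReal.toReal_pos hμS₀.ne' hμS)]
  gcongr
  · exact setIntegral_exp_pos hμS₀.ne' (hint N)
  refine setIntegral_exp_mul_le hr.le hS hμS (hint N) fun s hs => ?_
  have := (abs_sub_lt_iff.1 (hN s hs)).2
  linarith [hmax s hs]

lemma eventually_lt_inv_mul_log_setIntegral_exp_mul [TopologicalSpace α]
    [OpensMeasurableSpace α] [μ.IsOpenPosMeasure] {x : α} {a : ℝ} (hμS : μ S ≠ ⊤)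
    (hx : S ∈ 𝓝 x) (hφ : ContinuousAt φ x) (hh : TendstoUniformlyOn h φ atTop S)
    (hint : ∀ N : ℕ, IntegrableOn (fun s => exp (N * h N s)) S μ) (ha : a < φ x) :
    ∀ᶠ N : ℕ in atTop, a < (N : ℝ)⁻¹ * log (∫ s in S, exp (N * h N s) ∂μ) := by
  obtain ⟨ε, hε, haε⟩ : ∃ ε > 0, a < φ x - 2 * ε := ⟨(φ x - a) / 3, by linarith, by linarith⟩
  obtain ⟨U, hU, hUo, hxU⟩ := eventually_nhds_iff.1
    ((eventually_mem_set.2 hx).and (hφ.eventually (lt_mem_nhds (sub_lt_self (φ x) hε))))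
  have hUS : U ⊆ S := fun s hs => (hU s hs).1
  have hμU : μ U ≠ ⊤ := ne_top_of_le_ne_top hμS (measure_mono hUS)
  have hμU₀ : 0 < μ.real U := ENNReal.toReal_pos (hUo.measure_pos μ ⟨x, hxU⟩).ne' hμU
  refine eventually_gt_of_inv_mul_add_le (C := log (μ.real U)) haε ?_
  filter_upwards [Metric.tendstoUniformlyOn_iff.1 hh ε hε, eventually_ne_atTop 0]
    with N hN hN₀
  have hr : (0 : ℝ) < N := by positivity
  rw [← inv_mul_log_mul_exp_mul (c := μ.real U) hr.ne' hμU₀]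
  gcongr
  refine mul_exp_mul_le_setIntegral hr.le hUo.measurableSet hUS hμU (hint N) fun s hs => ?_
  have := (abs_sub_lt_iff.1 (hN s (hUS hs))).1
  linarith [(hU s hs).2]

theorem tendsto_inv_mul_log_setIntegral_exp_mul [TopologicalSpace α] [OpensMeasurableSpace α]
    [μ.IsOpenPosMeasure] {x : α} (hS : MeasurableSet S) (hμS : μ S ≠ ⊤) (hx : S ∈ 𝓝 x)
    (hφ : ContinuousAt φ x) (hmax : IsMaxOn φ S x) (hh : TendstoUniformlyOn h φ atTop S)
    (hint : ∀ N : ℕ, IntegrableOn (fun s => exp (N * h N s)) S μ) :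
    Tendsto (fun N : ℕ => (N : ℝ)⁻¹ * log (∫ s in S, exp (N * h N s) ∂μ)) atTop
      (𝓝 (φ x)) :=
  tendsto_order.2
    ⟨fun _ ha => eventually_lt_inv_mul_log_setIntegral_exp_mul hμS hx hφ hh hint ha,
      fun _ hb => eventually_inv_mul_log_setIntegral_exp_mul_lt hS hμS
        (Measure.measure_pos_of_mem_nhds μ hx) (fun s hs => isMaxOn_iff.1 hmax s hs) hh hint hb⟩

end Laplace

lemma card_mul_inner_inv_card_smul_sum {ι E : Type*} [NormedAddCommGroup E]
    [InnerProductSpace ℝ E] (s : Finset ι) (x : E) (w : ι → E) :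
    (s.card : ℝ) * ⟪x, (s.card : ℝ)⁻¹ • ∑ i ∈ s, w i⟫ = ∑ i ∈ s, ⟪x, w i⟫ := by
  rcases s.eq_empty_or_nonempty with rfl | hs
  · simp
  · rw [inner_smul_right, inner_sum, mul_inv_cancel_left₀ (by positivity)]

theorem posterior_concentration_general {n : ℕ} {X : Type*} {Ω : Type*}
    [MeasurableSpace Ω] (P : Measure Ω)
    (S : Set (EuclideanSpace ℝ (Fin n)))
    (hS : IsCompact S) (hvol : 0 < volume S)
    (logZ : EuclideanSpace ℝ (Fin n) → ℝ)
    (hconv : ConvexOn ℝ S logZ) (hcont : ContinuousOn logZ S)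
    (t' : EuclideanSpace ℝ (Fin n)) (ht' : t' ∈ interior S)
    (g : EuclideanSpace ℝ (Fin n)) (hg : HasGradientAt logZ g t')
    (f : X → EuclideanSpace ℝ (Fin n)) (xs : ℕ → Ω → X)
    (hmean : ∀ᵐ ω ∂P,
      Tendsto (fun N : ℕ => (N : ℝ)⁻¹ • ∑ i ∈ Finset.range N, f (xs i ω))
        atTop (nhds g))
    (post : ℕ → Ω → EuclideanSpace ℝ (Fin n) → ℝ)
    (hpost : ∀ N ω t, post N ω t =
      Real.exp ((∑ i ∈ Finset.range N, ⟪t, f (xs i ω)⟫) - (N : ℝ) * logZ t) /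
        ∫ s in S, Real.exp ((∑ i ∈ Finset.range N, ⟪s, f (xs i ω)⟫) - (N : ℝ) * logZ s)) :
    ∀ t ∈ S, ∀ᵐ ω ∂P,
      Tendsto (fun N : ℕ => (post N ω t) ^ ((N : ℝ)⁻¹)) atTop
        (nhds (Real.exp (-(logZ t - logZ t' - ⟪g, t - t'⟫)))) := by
  intro t _
  filter_upwards [hmean] with ω hm
  set m := fun N : ℕ => (N : ℝ)⁻¹ • ∑ i ∈ Finset.range N, f (xs i ω)
  have hexp (N : ℕ) (s) : (∑ i ∈ Finset.range N, ⟪s, f (xs i ω)⟫) - N * logZ s =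
      N * (⟪s, m N⟫ - logZ s) := by
    rw [mul_sub, ← card_mul_inner_inv_card_smul_sum, Finset.card_range]
  have hint (N : ℕ) : IntegrableOn (fun s => exp (N * (⟪s, m N⟫ - logZ s))) S :=
    (continuous_exp.comp_continuousOn (continuousOn_const.mul
      ((continuous_id.inner continuous_const).continuousOn.sub hcont))).integrableOn_compact hS
  have hS' : S ∈ 𝓝 t' := mem_interior_iff_mem_nhds.1 ht'
  have hlog := tendsto_inv_mul_log_setIntegral_exp_mul hS.measurableSet
    hS.measure_lt_top.ne hS'
    ((continuous_id.inner continuous_const).continuousAt.sub (hcont.continuousAt hS'))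
    (hconv.isMaxOn_inner_sub_of_hasGradientAt (interior_subset ht') hg)
    (hS.isBounded.tendstoUniformlyOn_inner_sub hm logZ) hint
  have hbregman : -(logZ t - logZ t' - ⟪g, t - t'⟫) = (⟪t, g⟫ - logZ t) - (⟪t', g⟫ - logZ t') := by
    rw [inner_sub_right, real_inner_comm t, real_inner_comm t']
    ring
  rw [hbregman]
  refine ((continuous_exp.tendsto _).comp
    (((tendsto_const_nhds.inner hm).sub_const _).sub hlog)).congr' ?_
  filter_upwards [eventually_ne_atTop 0] with N hN
  simp only [Function.comp_apply, hpost, hexp]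
  rw [rpow_inv_exp_mul_div (Nat.cast_ne_zero.2 hN) (setIntegral_exp_pos hvol.ne' (hint N))]

/-- Posterior concentration for exponential families (pointwise form): if the empirical mean
of the sufficient statistic converges almost surely to `∇ log Z (t')`, then the `N`-th root
of the Bayes posterior density under a uniform prior on the compact set `S` converges almost
surely to `exp (-D_{log Z}(t, t'))`. -/
theorem posterior_concentration {n : ℕ} {X : Type*} [MeasurableSpace X] {Ω : Type*}
    [MeasurableSpace Ω] (P : Measure Ω) [IsProbabilityMeasure P]
    (S : Set (EuclideanSpace ℝ (Fin n)))
    (hS : IsCompact S) (hScl : S = closure (interior S)) (hvol : 0 < volume S)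
    (logZ : EuclideanSpace ℝ (Fin n) → ℝ)
    (hconv : ConvexOn ℝ S logZ) (hcont : ContinuousOn logZ S)
    (t' : EuclideanSpace ℝ (Fin n)) (ht' : t' ∈ interior S)
    (g : EuclideanSpace ℝ (Fin n)) (hg : HasGradientAt logZ g t')
    (f : X → EuclideanSpace ℝ (Fin n)) (xs : ℕ → Ω → X)
    (hmean : ∀ᵐ ω ∂P,
      Tendsto (fun N : ℕ => (N : ℝ)⁻¹ • ∑ i ∈ Finset.range N, f (xs i ω))
        atTop (nhds g))
    (post : ℕ → Ω → EuclideanSpace ℝ (Fin n) → ℝ)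
    (hpost : ∀ N ω t, post N ω t =
      Real.exp ((∑ i ∈ Finset.range N, ⟪t, f (xs i ω)⟫) - (N : ℝ) * logZ t) /
        ∫ s in S, Real.exp ((∑ i ∈ Finset.range N, ⟪s, f (xs i ω)⟫) - (N : ℝ) * logZ s)) :
    ∀ t ∈ S, ∀ᵐ ω ∂P,
      Tendsto (fun N : ℕ => (post N ω t) ^ ((N : ℝ)⁻¹)) atTop
        (nhds (Real.exp (-(logZ t - logZ t' - ⟪g, t - t'⟫)))) :=
  posterior_concentration_general P S hS hvol logZ hconv hcont t' ht' g hg f xs hmean post hpost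
end
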